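/- Let x ∈ N and n' ∈ N'(w). Then the functions φ_{V₁}(x) = b₀ and φ_{V₂}(x) = b₀d₁ − b₁, computed from the power series coefficients of the entries of a matrix, satisfy φ_{V₁}(x·n') = φ_{V₁}(x) and φ_{V₂}(x·n') = φ_{V₂}(x); that is, these determinantal expressions are invariant under right multiplication by N'(w). -/

import Mathlib

open PowerSeries

/-- Membership in the unipotent group `N` of the affine Kac–Moody group of type `Ã₁`:
matrices over `ℂ[[z]]` with determinant 1, constant terms of the diagonal entries
equal to `1`, and constant term of the lower-left entry equal to `0`. -/
def memN (x : Matrix (Fin 2) (Fin 2) (PowerSeries ℂ)) : Prop :=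
  x.det = 1 ∧
    constantCoeff (x 0 0) = 1 ∧ constantCoeff (x 1 1) = 1 ∧
    constantCoeff (x 1 0) = 0

/-- Membership in the subgroup `N'(w)` for `w = s₂s₁s₂s₁`: elements of `N` whose
upper-right entry is divisible by `z⁴`. -/
def memN' (x : Matrix (Fin 2) (Fin 2) (PowerSeries ℂ)) : Prop :=
  memN x ∧ (PowerSeries.X : PowerSeries ℂ) ^ 4 ∣ x 0 1

/-!
Both functions only see the entries modulo `z²`. Write `n' = [[a', b'], [c', d']]`. Since `z² ∣ b'`,
the second column of `x n'` is `(b d', d d')` modulo `z²`, and `d'₀ = d₀ = 1` gives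
`(b d')₀ = b₀`, `(b d')₁ = b₁ + b₀ d'₁` and `(d d')₁ = d₁ + d'₁`;
the two `b₀ d'₁` terms cancel in `b₀ d₁ − b₁`.
-/

variable {R : Type*} [CommRing R]

noncomputable def phiV1 (x : Matrix (Fin 2) (Fin 2) R⟦X⟧) : R :=
  coeff 0 (x 0 1)

noncomputable def phiV2 (x : Matrix (Fin 2) (Fin 2) R⟦X⟧) : R :=
  coeff 0 (x 0 1) * coeff 1 (x 1 1) - coeff 1 (x 0 1)

lemma coeff_mul_eq_zero_of_X_pow_dvd {n k : ℕ} {p : R⟦X⟧} (q : R⟦X⟧) (hp : X ^ n ∣ p)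
    (hk : k < n) : coeff k (q * p) = 0 :=
  X_pow_dvd_iff.mp (dvd_mul_of_dvd_right hp q) k hk

lemma coeff_zero_mul_of_constantCoeff_eq_one {p q : R⟦X⟧} (hq : constantCoeff q = 1) :
    coeff 0 (p * q) = coeff 0 p := by
  simp [coeff_zero_eq_constantCoeff_apply, hq]

lemma coeff_one_mul_of_constantCoeff_eq_one {p q : R⟦X⟧} (hq : constantCoeff q = 1) :
    coeff 1 (p * q) = coeff 1 p + coeff 0 p * coeff 1 q := by
  rw [coeff_one_mul, hq, coeff_zero_eq_constantCoeff_apply]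
  ring

lemma coeff_mul_apply_one_of_X_pow_dvd {n k : ℕ} (x : Matrix (Fin 2) (Fin 2) R⟦X⟧)
    {y : Matrix (Fin 2) (Fin 2) R⟦X⟧} (hy : X ^ n ∣ y 0 1) (hk : k < n) (i : Fin 2) :
    coeff k ((x * y) i 1) = coeff k (x i 1 * y 1 1) := by
  rw [Matrix.mul_apply, Fin.sum_univ_two, map_add, coeff_mul_eq_zero_of_X_pow_dvd _ hy hk,
    zero_add]

theorem phiV1_mul (x : Matrix (Fin 2) (Fin 2) R⟦X⟧) {y : Matrix (Fin 2) (Fin 2) R⟦X⟧}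
    (hb : X ∣ y 0 1) (hd : constantCoeff (y 1 1) = 1) : phiV1 (x * y) = phiV1 x := by
  rw [phiV1, coeff_mul_apply_one_of_X_pow_dvd x (n := 1) (by rwa [pow_one]) zero_lt_one,
    coeff_zero_mul_of_constantCoeff_eq_one hd, phiV1]

theorem phiV2_mul {x y : Matrix (Fin 2) (Fin 2) R⟦X⟧} (hb : X ^ 2 ∣ y 0 1)
    (hd : constantCoeff (y 1 1) = 1) (hxd : constantCoeff (x 1 1) = 1) :
    phiV2 (x * y) = phiV2 x := by
  simp only [phiV2, coeff_mul_apply_one_of_X_pow_dvd x hb zero_lt_two,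
    coeff_mul_apply_one_of_X_pow_dvd x hb one_lt_two, coeff_zero_mul_of_constantCoeff_eq_one hd,
    coeff_one_mul_of_constantCoeff_eq_one hd, coeff_zero_eq_constantCoeff_apply (x 1 1), hxd]
  ring

/-- The functions `φ_{V₁} = b₀` and `φ_{V₂} = b₀d₁ − b₁` on `N` are invariant under
right multiplication by `N'(w)`. -/
theorem phi_V1_V2_Nprime_invariant
    (x n' : Matrix (Fin 2) (Fin 2) (PowerSeries ℂ))
    (hx : memN x) (hn' : memN' n') :
    (coeff 0) ((x * n') 0 1) = (coeff 0) (x 0 1) ∧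
    (coeff 0) ((x * n') 0 1) * (coeff 1) ((x * n') 1 1)
        - (coeff 1) ((x * n') 0 1)
      = (coeff 0) (x 0 1) * (coeff 1) (x 1 1) - (coeff 1) (x 0 1) := by
  obtain ⟨-, -, hxd, -⟩ := hx
  obtain ⟨⟨-, -, hd, -⟩, hb⟩ := hn'
  have hb2 : X ^ 2 ∣ n' 0 1 := (pow_dvd_pow X (by norm_num)).trans hb
  exact ⟨phiV1_mul x ((dvd_pow_self X two_ne_zero).trans hb2) hd, phiV2_mul hb2 hd hxd⟩
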